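/- arXiv:2404.13492 — 4 statements merged into one kernel-verified Lean document; each statement's English description precedes it below -/
import Mathlib

section
/- For every n ≥ 1 and α ∈ ℕ, the recurrence relation x^θ·P_n^{(α)}(x) = P_{n+θ}^{(α)}(x) + Σ_{j=n−1}^{n+θ−1} κ_{n,j}^{(α)}·P_j^{(α)}(x) holds, where κ_{n,j}^{(α)} := ⟨P_n^{(α)}, x·Q_j^{(α)}⟩_θ^α · (H_j^{(α)})^{−1}. -/
open MeasureTheory Polynomial Matrix Filter

/-- Evaluation of a matrix polynomial at a real scalar. -/
noncomputable def mpEval {p : ℕ} (f : Polynomial (Matrix (Fin p) (Fin p) ℝ)) (x : ℝ) :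
    Matrix (Fin p) (Fin p) ℝ :=
  f.sum fun k a => x ^ k • a

/-- The adjacent matrix-valued θ-deformed bilinear form
`⟨f, g⟩_θ^α = ∫ f(x) · x^α · W(x) · g(x^θ)ᵀ dx`, computed entrywise. -/
noncomputable def bform {p : ℕ} (θ : ℕ) (W : ℝ → Matrix (Fin p) (Fin p) ℝ) (α : ℕ)
    (f g : Polynomial (Matrix (Fin p) (Fin p) ℝ)) : Matrix (Fin p) (Fin p) ℝ :=
  Matrix.of fun i j => ∫ x : ℝ, (mpEval f x * (x ^ α • W x) * (mpEval g (x ^ θ))ᵀ) i j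

/-- A matrix polynomial is monic of degree `n`: the `x^n` coefficient is `I_p`
and all higher coefficients vanish. -/
def MonicDeg {p : ℕ} (f : Polynomial (Matrix (Fin p) (Fin p) ℝ)) (n : ℕ) : Prop :=
  f.coeff n = 1 ∧ ∀ k : ℕ, n < k → f.coeff k = 0

/-- The k-th moment `m_k = ∫ x^k W(x) dx`, computed entrywise. -/
noncomputable def mom {p : ℕ} (W : ℝ → Matrix (Fin p) (Fin p) ℝ) (k : ℕ) :
    Matrix (Fin p) (Fin p) ℝ :=
  Matrix.of fun i j => ∫ x : ℝ, x ^ k * W x i j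

/-- The block moment matrix `M_n^{(α)} = (m_{α+i+jθ})_{i,j=0}^{n-1}`, as an
`n × n` matrix over the ring of `p × p` real matrices. -/
noncomputable def momMat {p : ℕ} (θ : ℕ) (W : ℝ → Matrix (Fin p) (Fin p) ℝ) (n α : ℕ) :
    Matrix (Fin n) (Fin n) (Matrix (Fin p) (Fin p) ℝ) :=
  Matrix.of fun i j => mom W (α + (i : ℕ) + (j : ℕ) * θ)

/-!
The form only sees the moments: `⟨f, g⟩_θ^α = ∑ f_k m_{α+k+lθ} g_lᵀ`, so the recurrence is
purely algebraic and holds for the form built in this way from any sequence of moments.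
For such a form, `⟨x^θ f, g⟩ = ⟨f, x g⟩`, and the families `P`, `Q` are biorthogonal:
`⟨P_i, Q_j⟩ = δ_{ij} H_j`. Hence `F := x^θ P_n - P_{n+θ} - ∑ κ_{n,j} P_j`, whose degree is
`< n + θ` because the leading terms cancel, is orthogonal to `Q_j` for all `j < n + θ`: for
`j < n - 1` because `⟨P_n, x Q_j⟩ = 0`, and for the other `j` because `κ_{n,j} H_j = ⟨P_n, x Q_j⟩`.
Such an `F` vanishes, since `⟨F, Q_d⟩ = lc(F) H_d` for `d = deg F`.
-/

lemma Polynomial.degree_sub_lt_of_coeff_eq {R : Type*} [Ring R] {f g : R[X]} {N : ℕ}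
    (hf : f.natDegree ≤ N) (hg : g.natDegree ≤ N) (hfg : f.coeff N = g.coeff N) :
    (f - g).degree < N := by
  refine (degree_lt_iff_coeff_zero _ _).mpr fun k hk => ?_
  rw [coeff_sub]
  obtain rfl | hk := hk.eq_or_lt
  · exact sub_eq_zero.mpr hfg
  · rw [coeff_eq_zero_of_natDegree_lt (hf.trans_lt hk), coeff_eq_zero_of_natDegree_lt
      (hg.trans_lt hk), sub_zero]

section MomentForm

variable {ι R : Type*} [Fintype ι] [DecidableEq ι] [Ring R]

noncomputable def momentForm (θ : ℕ) (m : ℕ → Matrix ι ι R) (f g : (Matrix ι ι R)[X]) :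
    Matrix ι ι R :=
  f.sum fun k a => g.sum fun l b => a * m (k + l * θ) * bᵀ

variable {θ : ℕ} {m : ℕ → Matrix ι ι R}

lemma momentForm_monomial_left (k : ℕ) (a : Matrix ι ι R) (g : (Matrix ι ι R)[X]) :
    momentForm θ m (monomial k a) g = g.sum fun l b => a * m (k + l * θ) * bᵀ :=
  sum_monomial_index _ _ (by simp [Polynomial.sum])

lemma momentForm_monomial_right (f : (Matrix ι ι R)[X]) (l : ℕ) (b : Matrix ι ι R) :
    momentForm θ m f (monomial l b) = f.sum fun k a => a * m (k + l * θ) * bᵀ := by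
  unfold momentForm
  congr 1
  funext k a
  exact sum_monomial_index _ _ (by simp)

lemma momentForm_monomial_monomial (k l : ℕ) (a b : Matrix ι ι R) :
    momentForm θ m (monomial k a) (monomial l b) = a * m (k + l * θ) * bᵀ := by
  rw [momentForm_monomial_left, sum_monomial_index _ _ (by simp)]

lemma momentForm_add_left (f₁ f₂ g : (Matrix ι ι R)[X]) :
    momentForm θ m (f₁ + f₂) g = momentForm θ m f₁ g + momentForm θ m f₂ g :=
  sum_add_index _ _ _ (fun _ => by simp [Polynomial.sum])
    fun _ _ _ => by simp [Polynomial.sum, add_mul, Finset.sum_add_distrib]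

lemma momentForm_add_right (f g₁ g₂ : (Matrix ι ι R)[X]) :
    momentForm θ m f (g₁ + g₂) = momentForm θ m f g₁ + momentForm θ m f g₂ := by
  simp only [momentForm, ← sum_add]
  congr 1
  funext k a
  exact sum_add_index _ _ _ (fun _ => by simp) fun _ _ _ => by simp [mul_add]

lemma momentForm_sub_left (f₁ f₂ g : (Matrix ι ι R)[X]) :
    momentForm θ m (f₁ - f₂) g = momentForm θ m f₁ g - momentForm θ m f₂ g :=
  eq_sub_of_add_eq (by rw [← momentForm_add_left, sub_add_cancel])

lemma momentForm_sum_left {κ : Type*} (s : Finset κ) (f : κ → (Matrix ι ι R)[X])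
    (g : (Matrix ι ι R)[X]) :
    momentForm θ m (∑ j ∈ s, f j) g = ∑ j ∈ s, momentForm θ m (f j) g :=
  map_sum (AddMonoidHom.mk' (momentForm θ m · g) (momentForm_add_left · · g)) f s

lemma momentForm_C_mul_left (a : Matrix ι ι R) (f g : (Matrix ι ι R)[X]) :
    momentForm θ m (C a * f) g = a * momentForm θ m f g := by
  rw [C_mul', momentForm, sum_smul_index _ _ _ fun _ => by simp [Polynomial.sum]]
  simp [momentForm, Polynomial.sum, Finset.mul_sum, mul_assoc]

lemma momentForm_X_pow_mul_left (f g : (Matrix ι ι R)[X]) :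
    momentForm θ m (X ^ θ * f) g = momentForm θ m f (X * g) := by
  induction f using Polynomial.induction_on' with
  | add f₁ f₂ h₁ h₂ => rw [mul_add, momentForm_add_left, momentForm_add_left, h₁, h₂]
  | monomial k a =>
    induction g using Polynomial.induction_on' with
    | add g₁ g₂ h₁ h₂ => rw [mul_add, momentForm_add_right, momentForm_add_right, h₁, h₂]
    | monomial l b =>
      rw [X_pow_mul_monomial, X_mul_monomial, momentForm_monomial_monomial,
        momentForm_monomial_monomial]
      ring_nf

lemma momentForm_eq_sum_left (f g : (Matrix ι ι R)[X]) :
    momentForm θ m f g = f.sum fun k a => a * momentForm θ m (X ^ k) g := by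
  simp only [X_pow_eq_monomial, momentForm_monomial_left, one_mul]
  simp only [momentForm, Polynomial.sum, Finset.mul_sum, mul_assoc]

lemma momentForm_eq_sum_right (f g : (Matrix ι ι R)[X]) :
    momentForm θ m f g = g.sum fun l b => momentForm θ m f (X ^ l) * bᵀ := by
  simp only [X_pow_eq_monomial, momentForm_monomial_right, transpose_one, mul_one]
  simp only [momentForm, Polynomial.sum, Finset.sum_mul]
  exact Finset.sum_comm

lemma momentForm_eq_coeff_mul_of_natDegree_le {f g : (Matrix ι ι R)[X]} {d : ℕ}
    (hf : f.natDegree ≤ d) (hg : ∀ k < d, momentForm θ m (X ^ k) g = 0) :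
    momentForm θ m f g = f.coeff d * momentForm θ m (X ^ d) g := by
  rw [momentForm_eq_sum_left, Polynomial.sum_def, Finset.sum_eq_single d]
  · intro k hk hkd
    rw [hg k ((le_natDegree_of_mem_supp k hk).trans hf |>.lt_of_ne hkd), mul_zero]
  · intro hd
    rw [notMem_support_iff.mp hd, zero_mul]

lemma momentForm_eq_mul_coeff_of_natDegree_le {f g : (Matrix ι ι R)[X]} {d : ℕ}
    (hg : g.natDegree ≤ d) (hf : ∀ l < d, momentForm θ m f (X ^ l) = 0) :
    momentForm θ m f g = momentForm θ m f (X ^ d) * (g.coeff d)ᵀ := by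
  rw [momentForm_eq_sum_right, Polynomial.sum_def, Finset.sum_eq_single d]
  · intro l hl hld
    rw [hf l ((le_natDegree_of_mem_supp l hl).trans hg |>.lt_of_ne hld), zero_mul]
  · intro hd
    rw [notMem_support_iff.mp hd, transpose_zero, mul_zero]

end MomentForm

section Biorthogonal

variable {ι R : Type*} [Fintype ι] [DecidableEq ι] [Ring R]

structure IsMonicBiorthogonal (θ : ℕ) (m : ℕ → Matrix ι ι R) (P Q : ℕ → (Matrix ι ι R)[X]) :
    Prop where
  natDegree_P_le (n : ℕ) : (P n).natDegree ≤ n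
  coeff_P_self (n : ℕ) : (P n).coeff n = 1
  natDegree_Q_le (n : ℕ) : (Q n).natDegree ≤ n
  coeff_Q_self (n : ℕ) : (Q n).coeff n = 1
  P_orthogonal (n : ℕ) : ∀ i < n, momentForm θ m (P n) (X ^ i) = 0
  Q_orthogonal (n : ℕ) : ∀ i < n, momentForm θ m (X ^ i) (Q n) = 0

namespace IsMonicBiorthogonal

variable {θ : ℕ} {m : ℕ → Matrix ι ι R} {P Q : ℕ → (Matrix ι ι R)[X]}

lemma momentForm_P_eq_zero (h : IsMonicBiorthogonal θ m P Q) {n : ℕ} {g : (Matrix ι ι R)[X]}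
    (hg : g.natDegree < n) : momentForm θ m (P n) g = 0 := by
  rw [momentForm_eq_mul_coeff_of_natDegree_le hg.le (h.P_orthogonal n),
    coeff_eq_zero_of_natDegree_lt hg, transpose_zero, mul_zero]

lemma momentForm_Q_eq_zero (h : IsMonicBiorthogonal θ m P Q) {n : ℕ} {f : (Matrix ι ι R)[X]}
    (hf : f.natDegree < n) : momentForm θ m f (Q n) = 0 := by
  rw [momentForm_eq_coeff_mul_of_natDegree_le hf.le (h.Q_orthogonal n),
    coeff_eq_zero_of_natDegree_lt hf, zero_mul]

lemma momentForm_P_Q_self (h : IsMonicBiorthogonal θ m P Q) (n : ℕ) :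
    momentForm θ m (P n) (Q n) = momentForm θ m (P n) (X ^ n) := by
  rw [momentForm_eq_mul_coeff_of_natDegree_le (h.natDegree_Q_le n) (h.P_orthogonal n),
    h.coeff_Q_self, transpose_one, mul_one]

lemma momentForm_X_pow_Q_self (h : IsMonicBiorthogonal θ m P Q) (n : ℕ) :
    momentForm θ m (X ^ n) (Q n) = momentForm θ m (P n) (X ^ n) := by
  rw [← h.momentForm_P_Q_self, momentForm_eq_coeff_mul_of_natDegree_le (h.natDegree_P_le n)
    (h.Q_orthogonal n), h.coeff_P_self, one_mul]

lemma momentForm_P_Q (h : IsMonicBiorthogonal θ m P Q) (i j : ℕ) :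
    momentForm θ m (P i) (Q j) = if j = i then momentForm θ m (P j) (X ^ j) else 0 := by
  split_ifs with hji
  · subst hji
    exact h.momentForm_P_Q_self j
  obtain hij | hij := Nat.lt_or_gt_of_ne hji
  · exact h.momentForm_P_eq_zero ((h.natDegree_Q_le j).trans_lt hij)
  · exact h.momentForm_Q_eq_zero ((h.natDegree_P_le i).trans_lt hij)

lemma eq_zero_of_degree_lt (h : IsMonicBiorthogonal θ m P Q)
    (hH : ∀ n, IsUnit (momentForm θ m (P n) (X ^ n))) {F : (Matrix ι ι R)[X]} {N : ℕ}
    (hF : F.degree < N) (hFQ : ∀ j < N, momentForm θ m F (Q j) = 0) : F = 0 := by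
  by_contra hF0
  have hd : F.natDegree < N := (natDegree_lt_iff_degree_lt hF0).mpr hF
  have hFd := hFQ _ hd
  rw [momentForm_eq_coeff_mul_of_natDegree_le le_rfl (h.Q_orthogonal _),
    h.momentForm_X_pow_Q_self, (hH _).mul_left_eq_zero] at hFd
  exact hF0 (leadingCoeff_eq_zero.mp hFd)

theorem X_pow_mul_eq (h : IsMonicBiorthogonal θ m P Q)
    (hH : ∀ n, IsUnit (momentForm θ m (P n) (X ^ n))) {n : ℕ} (hn : 1 ≤ n) :
    X ^ θ * P n = P (n + θ) + ∑ j ∈ Finset.Icc (n - 1) (n + θ - 1),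
      C (momentForm θ m (P n) (X * Q j) * Ring.inverse (momentForm θ m (P j) (X ^ j))) * P j := by
  set S := ∑ j ∈ Finset.Icc (n - 1) (n + θ - 1),
    C (momentForm θ m (P n) (X * Q j) * Ring.inverse (momentForm θ m (P j) (X ^ j))) * P j
  have hS : S.natDegree < n + θ := by
    refine (natDegree_sum_le_of_forall_le _ _ fun j hj => ?_).trans_lt (by omega : n + θ - 1 < _)
    exact (natDegree_C_mul_le _ _).trans ((h.natDegree_P_le j).trans (Finset.mem_Icc.mp hj).2)
  have hdeg : (X ^ θ * P n - (P (n + θ) + S)).degree < ↑(n + θ) := by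
    refine degree_sub_lt_of_coeff_eq ?_
      (natDegree_add_le_of_degree_le (h.natDegree_P_le _) hS.le) ?_
    · rw [add_comm n]
      exact natDegree_mul_le.trans (add_le_add (natDegree_X_pow_le θ) (h.natDegree_P_le n))
    · rw [coeff_add, coeff_eq_zero_of_natDegree_lt hS, add_zero, h.coeff_P_self,
        coeff_X_pow_mul, h.coeff_P_self]
  refine sub_eq_zero.mp (h.eq_zero_of_degree_lt hH hdeg fun j hj => ?_)
  simp only [S, momentForm_sub_left, momentForm_add_left, momentForm_X_pow_mul_left,
    momentForm_sum_left, momentForm_C_mul_left, h.momentForm_P_Q, mul_ite, mul_zero,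
    Finset.sum_ite_eq, if_neg (by omega : j ≠ n + θ)]
  split_ifs with hjS
  · rw [mul_assoc, Ring.inverse_mul_cancel _ (hH j), mul_one, zero_add, sub_self]
  · have hjn : 1 + j < n := by simp only [Finset.mem_Icc, not_and_or] at hjS; omega
    have hXQ := natDegree_mul_le.trans (add_le_add natDegree_X_le (h.natDegree_Q_le j))
    rw [h.momentForm_P_eq_zero (hXQ.trans_lt hjn)]
    rw [add_zero, sub_zero]

end IsMonicBiorthogonal

end Biorthogonal

section Moments

variable {p θ : ℕ} {W : ℝ → Matrix (Fin p) (Fin p) ℝ}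

lemma pow_mul_mul_mul_apply (k : ℕ) (A B : Matrix (Fin p) (Fin p) ℝ) (i j : Fin p) (x : ℝ) :
    x ^ k * (A * W x * B) i j = ∑ b, ∑ a, A i a * B b j * (x ^ k * W x a b) := by
  simp only [mul_apply, Finset.sum_mul, Finset.mul_sum]
  exact Finset.sum_congr rfl fun b _ => Finset.sum_congr rfl fun a _ => by ring

lemma integrable_pow_mul_mul_mul_apply
    (hWint : ∀ (k : ℕ) (i j : Fin p), Integrable fun x : ℝ => x ^ k * W x i j)
    (k : ℕ) (A B : Matrix (Fin p) (Fin p) ℝ) (i j : Fin p) :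
    Integrable fun x => x ^ k * (A * W x * B) i j := by
  simp only [pow_mul_mul_mul_apply]
  exact integrable_finsetSum _ fun b _ => integrable_finsetSum _ fun a _ =>
    (hWint k a b).const_mul _

lemma integral_pow_mul_mul_mul_apply
    (hWint : ∀ (k : ℕ) (i j : Fin p), Integrable fun x : ℝ => x ^ k * W x i j)
    (k : ℕ) (A B : Matrix (Fin p) (Fin p) ℝ) (i j : Fin p) :
    ∫ x, x ^ k * (A * W x * B) i j = (A * mom W k * B) i j := by
  simp only [pow_mul_mul_mul_apply]
  rw [integral_finsetSum _ fun b _ => integrable_finsetSum _ fun a _ => (hWint k a b).const_mul _]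
  simp only [integral_finsetSum _ fun a _ => (hWint _ a _).const_mul _, integral_const_mul,
    mul_apply, mom, of_apply, Finset.sum_mul]
  exact Finset.sum_congr rfl fun b _ => Finset.sum_congr rfl fun a _ => by ring

lemma mpEval_mul_mul_transpose_apply (α : ℕ) (f g : (Matrix (Fin p) (Fin p) ℝ)[X])
    (i j : Fin p) (x : ℝ) :
    (mpEval f x * (x ^ α • W x) * (mpEval g (x ^ θ))ᵀ) i j =
      f.sum fun k a => g.sum fun l b => x ^ (α + (k + l * θ)) * (a * W x * bᵀ) i j := by
  simp only [mpEval, Polynomial.sum, Finset.sum_mul, transpose_sum, Finset.mul_sum,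
    Matrix.sum_apply, transpose_smul, Matrix.smul_mul, Matrix.mul_smul, Matrix.smul_apply,
    smul_eq_mul]
  rw [Finset.sum_comm]
  refine Finset.sum_congr rfl fun k _ => Finset.sum_congr rfl fun l _ => ?_
  ring

lemma bform_eq_momentForm
    (hWint : ∀ (k : ℕ) (i j : Fin p), Integrable fun x : ℝ => x ^ k * W x i j)
    (α : ℕ) (f g : (Matrix (Fin p) (Fin p) ℝ)[X]) :
    bform θ W α f g = momentForm θ (fun k => mom W (α + k)) f g := by
  ext i j
  simp only [bform, of_apply, mpEval_mul_mul_transpose_apply, momentForm, Polynomial.sum,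
    Matrix.sum_apply]
  rw [integral_finsetSum _ fun k _ => integrable_finsetSum _ fun l _ =>
    integrable_pow_mul_mul_mul_apply hWint _ _ _ i j]
  simp only [integral_finsetSum _ fun l _ => integrable_pow_mul_mul_mul_apply hWint _ _ _ i j,
    integral_pow_mul_mul_mul_apply hWint]

end Moments

theorem statement5_general
    (p θ : ℕ)
    (W : ℝ → Matrix (Fin p) (Fin p) ℝ)
    (hWint : ∀ (k : ℕ) (i j : Fin p), Integrable fun x : ℝ => x ^ k * W x i j)
    (P Q : ℕ → ℕ → Polynomial (Matrix (Fin p) (Fin p) ℝ))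
    (hPmonic : ∀ n α : ℕ, MonicDeg (P n α) n)
    (hPorth : ∀ n α : ℕ, ∀ i < n, bform θ W α (P n α) (X ^ i) = 0)
    (hQmonic : ∀ n α : ℕ, MonicDeg (Q n α) n)
    (hQorth : ∀ n α : ℕ, ∀ i < n, bform θ W α (X ^ i) (Q n α) = 0)
    (H : ℕ → ℕ → Matrix (Fin p) (Fin p) ℝ)
    (hHdef : ∀ n α : ℕ, H n α = bform θ W α (P n α) (X ^ n))
    (hHunit : ∀ n α : ℕ, IsUnit (H n α)) :
    ∀ n : ℕ, 1 ≤ n → ∀ α : ℕ,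
      (X : Polynomial (Matrix (Fin p) (Fin p) ℝ)) ^ θ * P n α
        = P (n + θ) α
          + ∑ j ∈ Finset.Icc (n - 1) (n + θ - 1),
              C (bform θ W α (P n α) (X * Q j α) * Ring.inverse (H j α)) * P j α := by
  intro n hn α
  have hB := bform_eq_momentForm (θ := θ) hWint α
  have hH (j : ℕ) : H j α = momentForm θ (fun k => mom W (α + k)) (P j α) (X ^ j) :=
    (hHdef j α).trans (hB _ _)
  have h : IsMonicBiorthogonal θ (fun k => mom W (α + k)) (P · α) (Q · α) :=
    { natDegree_P_le := fun n => natDegree_le_iff_coeff_eq_zero.mpr (hPmonic n α).2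
      coeff_P_self := fun n => (hPmonic n α).1
      natDegree_Q_le := fun n => natDegree_le_iff_coeff_eq_zero.mpr (hQmonic n α).2
      coeff_Q_self := fun n => (hQmonic n α).1
      P_orthogonal := fun n i hi => hB _ _ ▸ hPorth n α i hi
      Q_orthogonal := fun n i hi => hB _ _ ▸ hQorth n α i hi }
  simp only [hB, hH]
  exact h.X_pow_mul_eq (fun j => hH j ▸ hHunit j α) hn

/-- recurrence relation
`x^θ·P_n^{(α)} = P_{n+θ}^{(α)} + Σ_{j=n-1}^{n+θ-1} κ_{n,j}^{(α)}·P_j^{(α)}`,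
with `κ_{n,j}^{(α)} = ⟨P_n^{(α)}, x·Q_j^{(α)}⟩_θ^α · (H_j^{(α)})⁻¹`. -/
theorem statement5
    (p θ : ℕ) (hp : 1 ≤ p) (hθ : 1 ≤ θ)
    (W : ℝ → Matrix (Fin p) (Fin p) ℝ)
    (hWmeas : ∀ i j : Fin p, Measurable fun x : ℝ => W x i j)
    (hWint : ∀ (k : ℕ) (i j : Fin p), Integrable fun x : ℝ => x ^ k * W x i j)
    (hM : ∀ (n α : ℕ), 1 ≤ n → IsUnit (momMat θ W n α))
    (P Q : ℕ → ℕ → Polynomial (Matrix (Fin p) (Fin p) ℝ))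
    (hPmonic : ∀ n α : ℕ, MonicDeg (P n α) n)
    (hPorth : ∀ n α : ℕ, ∀ i < n, bform θ W α (P n α) (X ^ i) = 0)
    (hQmonic : ∀ n α : ℕ, MonicDeg (Q n α) n)
    (hQorth : ∀ n α : ℕ, ∀ i < n, bform θ W α (X ^ i) (Q n α) = 0)
    (H : ℕ → ℕ → Matrix (Fin p) (Fin p) ℝ)
    (hHdef : ∀ n α : ℕ, H n α = bform θ W α (P n α) (X ^ n))
    (hHunit : ∀ n α : ℕ, IsUnit (H n α)) :
    ∀ n : ℕ, 1 ≤ n → ∀ α : ℕ,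
      (X : Polynomial (Matrix (Fin p) (Fin p) ℝ)) ^ θ * P n α
        = P (n + θ) α
          + ∑ j ∈ Finset.Icc (n - 1) (n + θ - 1),
              C (bform θ W α (P n α) (X * Q j α) * Ring.inverse (H j α)) * P j α :=
  statement5_general p θ W hWint P Q hPmonic hPorth hQmonic hQorth H hHdef hHunit
end

section
/- For every n ∈ ℕ and α ∈ ℕ, the recurrence relation x·Q_n^{(α)}(x) = Q_{n+1}^{(α)}(x) + Σ_{j=max(n−θ,0)}^{n} ℓ_{n,j}^{(α)}·Q_j^{(α)}(x) holds, where the coefficients ℓ_{n,j}^{(α)} are determined by (ℓ_{n,j}^{(α)})^⊤ := (H_j^{(α)})^{−1}·⟨P_j^{(α)}, x·Q_n^{(α)}⟩_θ^α. -/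
open MeasureTheory Polynomial Matrix Filter

/-! Expanding both arguments in monomials turns `⟨f, g⟩_θ^α` into the finite sum
`∑ f_k m_{α+k+lθ} g_lᵀ`, so the form is additive in `g` with `⟨f, A g⟩ = ⟨f, g⟩ Aᵀ`;
and since `g` is evaluated at `x^θ`, `⟨f, X g⟩ = ⟨X^θ f, g⟩`. The two orthogonality
conditions make `P` and `Q` biorthogonal with `⟨P_m, Q_m⟩ = H_m`. Now `X Q_n - Q_{n+1}`
has degree at most `n`, so it is a combination `∑_{j ≤ n} c_j Q_j`; pairing with `P_m`
gives `c_m = (H_m⁻¹ ⟨P_m, X Q_n⟩)ᵀ`, and `⟨P_m, X Q_n⟩ = ⟨X^θ P_m, Q_n⟩` vanishes once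
`m + θ < n`. -/

def HasFiniteMoments {p : ℕ} (W : ℝ → Matrix (Fin p) (Fin p) ℝ) : Prop :=
  ∀ (k : ℕ) (i j : Fin p), Integrable fun x : ℝ => x ^ k * W x i j

section BilinearForm

variable {p θ α : ℕ} {W : ℝ → Matrix (Fin p) (Fin p) ℝ}

lemma mpEval_eq_eval (f : Polynomial (Matrix (Fin p) (Fin p) ℝ)) (x : ℝ) :
    mpEval f x = f.eval (algebraMap ℝ _ x) := by
  rw [mpEval, eval_eq_sum]
  congr 1 with k a
  rw [← map_pow, ← Algebra.commutes, ← Algebra.smul_def]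

lemma mpEval_X_pow_mul (k : ℕ) (f : Polynomial (Matrix (Fin p) (Fin p) ℝ)) (x : ℝ) :
    mpEval (X ^ k * f) x = x ^ k • mpEval f x := by
  rw [mpEval_eq_eval, mpEval_eq_eval, X_pow_mul, eval_mul_X_pow, ← map_pow, ← Algebra.commutes,
    ← Algebra.smul_def]

lemma mpEval_X_mul (f : Polynomial (Matrix (Fin p) (Fin p) ℝ)) (x : ℝ) :
    mpEval (X * f) x = x • mpEval f x := by
  simpa using mpEval_X_pow_mul 1 f x

lemma bform_X_mul_right (f g : Polynomial (Matrix (Fin p) (Fin p) ℝ)) :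
    bform θ W α f (X * g) = bform θ W α (X ^ θ * f) g := by
  ext i j
  simp only [bform, of_apply, mpEval_X_mul, mpEval_X_pow_mul, transpose_smul, mul_smul_comm,
    smul_mul_assoc, smul_comm (_ ^ θ : ℝ)]

lemma mul_mul_mul_apply_eq_sum (c : ℝ) (A M B : Matrix (Fin p) (Fin p) ℝ) (i j : Fin p) :
    c * (A * M * B) i j = ∑ b, ∑ a, A i a * B b j * (c * M a b) := by
  simp only [mul_apply, Finset.mul_sum, Finset.sum_mul]
  refine Finset.sum_congr rfl fun b _ => Finset.sum_congr rfl fun a _ => ?_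
  ring

lemma integrable_pow_mul_mul_apply (hW : HasFiniteMoments W)
    (m : ℕ) (A B : Matrix (Fin p) (Fin p) ℝ) (i j : Fin p) :
    Integrable fun x : ℝ => x ^ m * (A * W x * B) i j := by
  simp only [mul_mul_mul_apply_eq_sum]
  exact integrable_finsetSum _ fun b _ => integrable_finsetSum _ fun a _ =>
    (hW m a b).const_mul _

lemma integral_pow_mul_mul_apply (hW : HasFiniteMoments W)
    (m : ℕ) (A B : Matrix (Fin p) (Fin p) ℝ) (i j : Fin p) :
    ∫ x : ℝ, x ^ m * (A * W x * B) i j = (A * mom W m * B) i j := by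
  simp only [mul_mul_mul_apply_eq_sum]
  rw [integral_finsetSum _ fun b _ => integrable_finsetSum _ fun a _ =>
    (hW m a b).const_mul _]
  simp only [mul_apply, Finset.sum_mul, mom, of_apply]
  refine Finset.sum_congr rfl fun b _ => ?_
  rw [integral_finsetSum _ fun a _ => (hW m a b).const_mul _]
  refine Finset.sum_congr rfl fun a _ => ?_
  rw [integral_const_mul]
  ring

lemma mpEval_mul_smul_mul_transpose_apply (f g : Polynomial (Matrix (Fin p) (Fin p) ℝ))
    (i j : Fin p) (x : ℝ) :
    (mpEval f x * (x ^ α • W x) * (mpEval g (x ^ θ))ᵀ) i j =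
      ∑ k ∈ f.support, ∑ l ∈ g.support,
        x ^ (α + k + l * θ) * (f.coeff k * W x * (g.coeff l)ᵀ) i j := by
  simp only [mpEval, Polynomial.sum_def, transpose_sum, Finset.sum_mul, Finset.mul_sum,
    transpose_smul, smul_mul_assoc, mul_smul_comm, smul_smul, Finset.smul_sum, Matrix.sum_apply,
    Matrix.smul_apply, smul_eq_mul]
  rw [Finset.sum_comm]
  refine Finset.sum_congr rfl fun k _ => Finset.sum_congr rfl fun l _ => ?_
  ring

lemma bform_eq_sum_mom (hW : HasFiniteMoments W)
    (f g : Polynomial (Matrix (Fin p) (Fin p) ℝ)) :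
    bform θ W α f g = f.sum fun k a => g.sum fun l b => a * mom W (α + k + l * θ) * bᵀ := by
  ext i j
  simp only [bform, of_apply, mpEval_mul_smul_mul_transpose_apply, Polynomial.sum_def,
    Matrix.sum_apply]
  rw [integral_finsetSum _ fun k _ => integrable_finsetSum _ fun l _ =>
    integrable_pow_mul_mul_apply hW _ _ _ i j]
  refine Finset.sum_congr rfl fun k _ => ?_
  rw [integral_finsetSum _ fun l _ => integrable_pow_mul_mul_apply hW _ _ _ i j]
  exact Finset.sum_congr rfl fun l _ => integral_pow_mul_mul_apply hW _ _ _ i j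

lemma bform_X_pow_left (hW : HasFiniteMoments W)
    (k : ℕ) (g : Polynomial (Matrix (Fin p) (Fin p) ℝ)) :
    bform θ W α (X ^ k) g = g.sum fun l b => mom W (α + k + l * θ) * bᵀ := by
  rw [bform_eq_sum_mom hW, X_pow_eq_monomial,
    sum_monomial_index _ _ (by simp [Polynomial.sum_def])]
  simp only [one_mul]

lemma bform_X_pow_right (hW : HasFiniteMoments W)
    (f : Polynomial (Matrix (Fin p) (Fin p) ℝ)) (l : ℕ) :
    bform θ W α f (X ^ l) = f.sum fun k a => a * mom W (α + k + l * θ) := by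
  rw [bform_eq_sum_mom hW, X_pow_eq_monomial]
  congr 1 with k a
  rw [sum_monomial_index _ _ (by simp), transpose_one, mul_one]

lemma bform_eq_sum_left (hW : HasFiniteMoments W)
    (f g : Polynomial (Matrix (Fin p) (Fin p) ℝ)) :
    bform θ W α f g = f.sum fun k a => a * bform θ W α (X ^ k) g := by
  simp only [bform_eq_sum_mom hW f, bform_X_pow_left hW, Polynomial.sum_def,
    Finset.mul_sum, mul_assoc]

lemma bform_eq_sum_right (hW : HasFiniteMoments W)
    (f g : Polynomial (Matrix (Fin p) (Fin p) ℝ)) :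
    bform θ W α f g = g.sum fun l b => bform θ W α f (X ^ l) * bᵀ := by
  simp only [bform_eq_sum_mom hW f g, bform_X_pow_right hW, Polynomial.sum_def,
    Finset.sum_mul]
  exact Finset.sum_comm

lemma bform_eq_zero_of_natDegree_lt_left (hW : HasFiniteMoments W)
    {n : ℕ} {f g : Polynomial (Matrix (Fin p) (Fin p) ℝ)} (hf : f.natDegree < n)
    (hg : ∀ i < n, bform θ W α (X ^ i) g = 0) : bform θ W α f g = 0 := by
  rw [bform_eq_sum_left hW, Polynomial.sum_def]
  exact Finset.sum_eq_zero fun k hk => by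
    rw [hg k ((le_natDegree_of_mem_supp k hk).trans_lt hf), mul_zero]

lemma bform_eq_zero_of_natDegree_lt_right (hW : HasFiniteMoments W)
    {n : ℕ} {f g : Polynomial (Matrix (Fin p) (Fin p) ℝ)} (hg : g.natDegree < n)
    (hf : ∀ i < n, bform θ W α f (X ^ i) = 0) : bform θ W α f g = 0 := by
  rw [bform_eq_sum_right hW, Polynomial.sum_def]
  exact Finset.sum_eq_zero fun l hl => by
    rw [hf l ((le_natDegree_of_mem_supp l hl).trans_lt hg), zero_mul]

lemma bform_add_right (hW : HasFiniteMoments W)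
    (f g₁ g₂ : Polynomial (Matrix (Fin p) (Fin p) ℝ)) :
    bform θ W α f (g₁ + g₂) = bform θ W α f g₁ + bform θ W α f g₂ := by
  rw [bform_eq_sum_right hW f (g₁ + g₂), bform_eq_sum_right hW f g₁,
    bform_eq_sum_right hW f g₂]
  exact sum_add_index _ _ _ (by simp) (by simp [mul_add])

lemma bform_C_mul_right (hW : HasFiniteMoments W)
    (f : Polynomial (Matrix (Fin p) (Fin p) ℝ)) (A : Matrix (Fin p) (Fin p) ℝ)
    (g : Polynomial (Matrix (Fin p) (Fin p) ℝ)) :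
    bform θ W α f (C A * g) = bform θ W α f g * Aᵀ := by
  rw [← smul_eq_C_mul, bform_eq_sum_right hW f (A • g), sum_smul_index _ _ _ (by simp),
    bform_eq_sum_right hW f g, Polynomial.sum_def, Polynomial.sum_def, Finset.sum_mul]
  simp only [transpose_mul, mul_assoc]

lemma bform_sum_right (hW : HasFiniteMoments W)
    {ι : Type*} (f : Polynomial (Matrix (Fin p) (Fin p) ℝ)) (s : Finset ι)
    (g : ι → Polynomial (Matrix (Fin p) (Fin p) ℝ)) :
    bform θ W α f (∑ j ∈ s, g j) = ∑ j ∈ s, bform θ W α f (g j) :=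
  map_sum (AddMonoidHom.mk' (bform θ W α f) (bform_add_right hW f)) g s

end BilinearForm

lemma Polynomial.exists_eq_sum_C_mul_of_degree_lt {R : Type*} [Ring R] {Q : ℕ → R[X]}
    (hdeg : ∀ m, (Q m).natDegree ≤ m) (hlead : ∀ m, (Q m).coeff m = 1) {n : ℕ} {f : R[X]}
    (hf : f.degree < n) : ∃ c : ℕ → R, f = ∑ j ∈ Finset.range n, C (c j) * Q j := by
  induction n generalizing f with
  | zero =>
    refine ⟨0, ?_⟩
    ext m
    simpa using (degree_lt_iff_coeff_zero f 0).1 hf m m.zero_le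
  | succ n ih =>
    have hf' : (f - C (f.coeff n) * Q n).degree < n := by
      refine (degree_lt_iff_coeff_zero _ n).2 fun m hm => ?_
      rcases hm.eq_or_lt with rfl | hlt
      · rw [coeff_sub, coeff_C_mul, hlead, mul_one, sub_self]
      · rw [coeff_sub, coeff_C_mul, (degree_lt_iff_coeff_zero f _).1 hf m hlt,
          coeff_eq_zero_of_natDegree_lt ((hdeg n).trans_lt hlt), mul_zero, sub_zero]
    obtain ⟨c, hc⟩ := ih hf'
    refine ⟨Function.update c n (f.coeff n), ?_⟩
    have hlow : ∑ j ∈ Finset.range n, C (Function.update c n (f.coeff n) j) * Q j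
        = ∑ j ∈ Finset.range n, C (c j) * Q j :=
      Finset.sum_congr rfl fun j hj => by
        rw [Function.update_of_ne (Finset.mem_range.1 hj).ne]
    rw [Finset.sum_range_succ, hlow, Function.update_self, ← hc, sub_add_cancel]

section Biorthogonality

variable {p θ α : ℕ} {W : ℝ → Matrix (Fin p) (Fin p) ℝ}
  {P Q : ℕ → Polynomial (Matrix (Fin p) (Fin p) ℝ)}

lemma MonicDeg.natDegree_le {f : Polynomial (Matrix (Fin p) (Fin p) ℝ)} {n : ℕ}
    (hf : MonicDeg f n) : f.natDegree ≤ n :=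
  natDegree_le_iff_coeff_eq_zero.2 hf.2

lemma MonicDeg.X_mul {f : Polynomial (Matrix (Fin p) (Fin p) ℝ)} {n : ℕ} (hf : MonicDeg f n) :
    MonicDeg (X * f) (n + 1) := by
  refine ⟨by rw [Polynomial.X_mul, coeff_mul_X, hf.1], fun k hk => ?_⟩
  obtain ⟨k, rfl⟩ := Nat.exists_eq_add_of_lt (Nat.zero_lt_of_lt hk)
  rw [zero_add, Polynomial.X_mul, coeff_mul_X, hf.2 k (by omega)]

lemma MonicDeg.degree_sub_lt {f g : Polynomial (Matrix (Fin p) (Fin p) ℝ)} {n : ℕ}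
    (hf : MonicDeg f n) (hg : MonicDeg g n) : (f - g).degree < n := by
  refine (degree_lt_iff_coeff_zero _ n).2 fun m hm => ?_
  rcases hm.eq_or_lt with rfl | hlt
  · rw [coeff_sub, hf.1, hg.1, sub_self]
  · rw [coeff_sub, hf.2 m hlt, hg.2 m hlt, sub_self]

lemma bform_P_Q_of_ne (hW : HasFiniteMoments W)
    (hPmonic : ∀ n, MonicDeg (P n) n) (hPorth : ∀ n, ∀ i < n, bform θ W α (P n) (X ^ i) = 0)
    (hQmonic : ∀ n, MonicDeg (Q n) n) (hQorth : ∀ n, ∀ i < n, bform θ W α (X ^ i) (Q n) = 0)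
    {m j : ℕ} (hjm : j ≠ m) : bform θ W α (P m) (Q j) = 0 := by
  rcases hjm.lt_or_gt with h | h
  · exact bform_eq_zero_of_natDegree_lt_right hW ((hQmonic j).natDegree_le.trans_lt h)
      (hPorth m)
  · exact bform_eq_zero_of_natDegree_lt_left hW ((hPmonic m).natDegree_le.trans_lt h)
      (hQorth j)

lemma bform_P_Q_self (hW : HasFiniteMoments W)
    (hPorth : ∀ n, ∀ i < n, bform θ W α (P n) (X ^ i) = 0) (hQmonic : ∀ n, MonicDeg (Q n) n)
    (m : ℕ) : bform θ W α (P m) (Q m) = bform θ W α (P m) (X ^ m) := by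
  rw [bform_eq_sum_right hW, sum_over_range' _ (by simp) (m + 1)
      (Nat.lt_succ_of_le (hQmonic m).natDegree_le), Finset.sum_range_succ,
    Finset.sum_eq_zero fun l hl => by rw [hPorth m l (Finset.mem_range.1 hl), zero_mul],
    (hQmonic m).1, transpose_one, mul_one, zero_add]

lemma eq_transpose_inverse_mul_bform_of_eq_add_sum (hW : HasFiniteMoments W)
    (hPmonic : ∀ n, MonicDeg (P n) n) (hPorth : ∀ n, ∀ i < n, bform θ W α (P n) (X ^ i) = 0)
    (hQmonic : ∀ n, MonicDeg (Q n) n) (hQorth : ∀ n, ∀ i < n, bform θ W α (X ^ i) (Q n) = 0)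
    {N m : ℕ} {g : Polynomial (Matrix (Fin p) (Fin p) ℝ)} {c : ℕ → Matrix (Fin p) (Fin p) ℝ}
    (hg : g = Q N + ∑ j ∈ Finset.range N, C (c j) * Q j) (hm : m < N)
    (hH : IsUnit (bform θ W α (P m) (X ^ m))) :
    c m = (Ring.inverse (bform θ W α (P m) (X ^ m)) * bform θ W α (P m) g)ᵀ := by
  have hPQ {j : ℕ} (hjm : j ≠ m) := bform_P_Q_of_ne hW hPmonic hPorth hQmonic hQorth hjm
  have hPg : bform θ W α (P m) g = bform θ W α (P m) (X ^ m) * (c m)ᵀ := by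
    rw [hg, bform_add_right hW, hPQ hm.ne', zero_add, bform_sum_right hW,
      Finset.sum_eq_single_of_mem m (Finset.mem_range.2 hm) fun j _ hjm => by
        rw [bform_C_mul_right hW, hPQ hjm, zero_mul],
      bform_C_mul_right hW, bform_P_Q_self hW hPorth hQmonic]
  rw [hPg, Ring.inverse_mul_cancel_left _ _ hH, transpose_transpose]

lemma bform_P_X_mul_Q_of_add_lt (hW : HasFiniteMoments W)
    (hPmonic : ∀ n, MonicDeg (P n) n) (hQorth : ∀ n, ∀ i < n, bform θ W α (X ^ i) (Q n) = 0)
    {m n : ℕ} (h : m + θ < n) : bform θ W α (P m) (X * Q n) = 0 := by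
  rw [bform_X_mul_right]
  refine bform_eq_zero_of_natDegree_lt_left hW ?_ (hQorth n)
  calc (X ^ θ * P m).natDegree ≤ θ + m :=
        natDegree_mul_le.trans (add_le_add (natDegree_X_pow_le θ) (hPmonic m).natDegree_le)
    _ < n := by omega

end Biorthogonality

theorem statement6_general
    (p θ : ℕ)
    (W : ℝ → Matrix (Fin p) (Fin p) ℝ)
    (hWint : ∀ (k : ℕ) (i j : Fin p), Integrable fun x : ℝ => x ^ k * W x i j)
    (P Q : ℕ → ℕ → Polynomial (Matrix (Fin p) (Fin p) ℝ))
    (hPmonic : ∀ n α : ℕ, MonicDeg (P n α) n)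
    (hPorth : ∀ n α : ℕ, ∀ i < n, bform θ W α (P n α) (X ^ i) = 0)
    (hQmonic : ∀ n α : ℕ, MonicDeg (Q n α) n)
    (hQorth : ∀ n α : ℕ, ∀ i < n, bform θ W α (X ^ i) (Q n α) = 0)
    (H : ℕ → ℕ → Matrix (Fin p) (Fin p) ℝ)
    (hHdef : ∀ n α : ℕ, H n α = bform θ W α (P n α) (X ^ n))
    (hHunit : ∀ n α : ℕ, IsUnit (H n α)) :
    ∀ n α : ℕ,
      (X : Polynomial (Matrix (Fin p) (Fin p) ℝ)) * Q n α
        = Q (n + 1) α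
          + ∑ j ∈ Finset.Icc (n - θ) n,
              C ((Ring.inverse (H j α) * bform θ W α (P j α) (X * Q n α))ᵀ) * Q j α := by
  intro n α
  obtain ⟨c, hc⟩ := exists_eq_sum_C_mul_of_degree_lt (fun m => (hQmonic m α).natDegree_le)
    (fun m => (hQmonic m α).1) ((hQmonic n α).X_mul.degree_sub_lt (hQmonic (n + 1) α))
  have hXQ : X * Q n α = Q (n + 1) α + ∑ j ∈ Finset.range (n + 1), C (c j) * Q j α := by
    rw [← hc, add_sub_cancel]
  have hc_eq {j : ℕ} (hj : j ∈ Finset.range (n + 1)) :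
      c j = (Ring.inverse (H j α) * bform θ W α (P j α) (X * Q n α))ᵀ := by
    rw [hHdef]
    exact eq_transpose_inverse_mul_bform_of_eq_add_sum hWint (hPmonic · α) (hPorth · α)
      (hQmonic · α) (hQorth · α) hXQ (Finset.mem_range.1 hj) (hHdef j α ▸ hHunit j α)
  conv_lhs => rw [hXQ]
  rw [Finset.sum_congr rfl fun j hj => by rw [hc_eq hj]]
  congr 1
  refine (Finset.sum_subset (fun j hj => ?_) fun j hjn hj => ?_).symm
  · simp only [Finset.mem_Icc, Finset.mem_range] at hj ⊢
    omega
  · rw [bform_P_X_mul_Q_of_add_lt hWint (hPmonic · α) (hQorth · α)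
      (by simp only [Finset.mem_Icc, Finset.mem_range] at hj hjn; omega),
      mul_zero, transpose_zero, map_zero, zero_mul]

/-- recurrence relation
`x·Q_n^{(α)} = Q_{n+1}^{(α)} + Σ_{j=max(n-θ,0)}^{n} ℓ_{n,j}^{(α)}·Q_j^{(α)}`,
where `(ℓ_{n,j}^{(α)})ᵀ = (H_j^{(α)})⁻¹·⟨P_j^{(α)}, x·Q_n^{(α)}⟩_θ^α`. -/
theorem statement6
    (p θ : ℕ) (hp : 1 ≤ p) (hθ : 1 ≤ θ)
    (W : ℝ → Matrix (Fin p) (Fin p) ℝ)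
    (hWmeas : ∀ i j : Fin p, Measurable fun x : ℝ => W x i j)
    (hWint : ∀ (k : ℕ) (i j : Fin p), Integrable fun x : ℝ => x ^ k * W x i j)
    (hM : ∀ (n α : ℕ), 1 ≤ n → IsUnit (momMat θ W n α))
    (P Q : ℕ → ℕ → Polynomial (Matrix (Fin p) (Fin p) ℝ))
    (hPmonic : ∀ n α : ℕ, MonicDeg (P n α) n)
    (hPorth : ∀ n α : ℕ, ∀ i < n, bform θ W α (P n α) (X ^ i) = 0)
    (hQmonic : ∀ n α : ℕ, MonicDeg (Q n α) n)
    (hQorth : ∀ n α : ℕ, ∀ i < n, bform θ W α (X ^ i) (Q n α) = 0)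
    (H : ℕ → ℕ → Matrix (Fin p) (Fin p) ℝ)
    (hHdef : ∀ n α : ℕ, H n α = bform θ W α (P n α) (X ^ n))
    (hHunit : ∀ n α : ℕ, IsUnit (H n α)) :
    ∀ n α : ℕ,
      (X : Polynomial (Matrix (Fin p) (Fin p) ℝ)) * Q n α
        = Q (n + 1) α
          + ∑ j ∈ Finset.Icc (n - θ) n,
              C ((Ring.inverse (H j α) * bform θ W α (P j α) (X * Q n α))ᵀ) * Q j α :=
  statement6_general p θ W hWint P Q hPmonic hPorth hQmonic hQorth H hHdef hHunit
end

section
/- (Geronimus transformation for the P-family.) For every n ≥ 1 and α ∈ ℕ: P_n^{(α)}(x) = P_n^{(α+θ)}(x) + ε_n^{(α)}·P_{n−1}^{(α+θ)}(x), where ε_n^{(α)} := H_n^{(α)}·(H_{n−1}^{(α+θ)})^{−1}. -/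
open MeasureTheory Polynomial Matrix Filter

section Aux
variable {p : ℕ} (θ : ℕ) (W : ℝ → Matrix (Fin p) (Fin p) ℝ)
  (hWint : ∀ (k : ℕ) (i j : Fin p), Integrable fun x : ℝ => x ^ k * W x i j)

lemma mpEval_X_pow (i : ℕ) (x : ℝ) :
    mpEval (X ^ i : Polynomial (Matrix (Fin p) (Fin p) ℝ)) x = x ^ i • 1 := by
  rw [mpEval, X_pow_eq_monomial, Polynomial.sum_monomial_index]
  simp

lemma mpEval_eq_sum (f : Polynomial (Matrix (Fin p) (Fin p) ℝ)) (x : ℝ) :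
    mpEval f x = ∑ k ∈ f.support, x ^ k • f.coeff k := by
  rw [mpEval, Polynomial.sum_def]

include hWint in
lemma aux_integrable (m : ℕ) (a : Matrix (Fin p) (Fin p) ℝ) (i j : Fin p) :
    Integrable fun x : ℝ => x ^ m * (a * W x) i j := by
  have h : (fun x : ℝ => x ^ m * (a * W x) i j)
      = fun x => ∑ l, a i l * (x ^ m * W x l j) := by
    funext x
    simp [Matrix.mul_apply, Finset.mul_sum, mul_left_comm]
  rw [h]
  exact integrable_finset_sum _ fun l _ => ((hWint m l j).const_mul _)

include hWint in
lemma mul_mom_apply (m : ℕ) (a : Matrix (Fin p) (Fin p) ℝ) (i j : Fin p) :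
    (a * mom W m) i j = ∫ x : ℝ, x ^ m * (a * W x) i j := by
  have h : (fun x : ℝ => x ^ m * (a * W x) i j)
      = fun x => ∑ l, a i l * (x ^ m * W x l j) := by
    funext x
    simp [Matrix.mul_apply, Finset.mul_sum, mul_left_comm]
  rw [h, integral_finset_sum _ fun l _ => ((hWint m l j).const_mul _)]
  simp only [integral_const_mul]
  simp [Matrix.mul_apply, mom]

include hWint in
lemma bform_X_pow (α i : ℕ) (f : Polynomial (Matrix (Fin p) (Fin p) ℝ)) :
    bform θ W α f (X ^ i) = ∑ k ∈ f.support, f.coeff k * mom W (α + k + i * θ) := by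
  have hpt : ∀ x : ℝ, (mpEval f x * (x ^ α • W x) * (mpEval (X ^ i : Polynomial (Matrix (Fin p) (Fin p) ℝ)) (x ^ θ))ᵀ)
      = ∑ k ∈ f.support, (x ^ (α + k + i * θ)) • (f.coeff k * W x) := by
    intro x
    rw [mpEval_X_pow, mpEval_eq_sum, Matrix.transpose_smul, Matrix.transpose_one,
      Finset.sum_mul, Finset.sum_mul]
    refine Finset.sum_congr rfl fun k _ => ?_
    rw [Matrix.smul_mul, Matrix.smul_mul, Matrix.mul_smul, Matrix.mul_smul, mul_one,
      smul_smul, smul_smul, ← pow_mul, ← pow_add, ← pow_add]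
    congr 1
    ring
  ext a b
  simp only [bform, Matrix.of_apply]
  calc (∫ x : ℝ, (mpEval f x * (x ^ α • W x) * (mpEval (X ^ i : Polynomial (Matrix (Fin p) (Fin p) ℝ)) (x ^ θ))ᵀ) a b)
      = ∫ x : ℝ, ∑ k ∈ f.support, x ^ (α + k + i * θ) * (f.coeff k * W x) a b := by
        refine integral_congr_ae (Filter.Eventually.of_forall fun x => ?_)
        simp only [hpt x, Matrix.sum_apply, Matrix.smul_apply, smul_eq_mul]
    _ = ∑ k ∈ f.support, ∫ x : ℝ, x ^ (α + k + i * θ) * (f.coeff k * W x) a b :=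
        integral_finset_sum _ fun k _ => aux_integrable W hWint _ _ a b
    _ = ∑ k ∈ f.support, (f.coeff k * mom W (α + k + i * θ)) a b :=
        Finset.sum_congr rfl fun k _ => (mul_mom_apply W hWint _ _ a b).symm
    _ = (∑ k ∈ f.support, f.coeff k * mom W (α + k + i * θ)) a b := by
        rw [Matrix.sum_apply]

include hWint in
lemma bform_X_pow_range (α i N : ℕ) (f : Polynomial (Matrix (Fin p) (Fin p) ℝ))
    (hf : ∀ k, N ≤ k → f.coeff k = 0) :
    bform θ W α f (X ^ i) = ∑ k ∈ Finset.range N, f.coeff k * mom W (α + k + i * θ) := by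
  rw [bform_X_pow θ W hWint]
  refine Finset.sum_subset (fun k hk => ?_) (fun k _ hk => ?_)
  · rw [Finset.mem_range]
    by_contra hc
    exact (Polynomial.mem_support_iff.mp hk) (hf k (le_of_not_gt hc))
  · rw [Polynomial.notMem_support_iff.mp hk, zero_mul]

end Aux

lemma vec_eq_zero {R : Type*} [Ring R] {n : ℕ} (M : Matrix (Fin n) (Fin n) R)
    (hMu : IsUnit M) (d : Fin n → R) (h : Matrix.vecMul d M = 0) : d = 0 := by
  obtain ⟨B, hB, -⟩ := isUnit_iff_exists.mp hMu
  calc d = Matrix.vecMul d (M * B) := by rw [hB, Matrix.vecMul_one]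
    _ = Matrix.vecMul (Matrix.vecMul d M) B := by rw [Matrix.vecMul_vecMul]
    _ = 0 := by rw [h, Matrix.zero_vecMul]

/-- Geronimus transformation for the P-family:
`P_n^{(α)} = P_n^{(α+θ)} + ε_n^{(α)}·P_{n-1}^{(α+θ)}` with
`ε_n^{(α)} = H_n^{(α)}·(H_{n-1}^{(α+θ)})⁻¹`. -/
theorem statement8
    (p θ : ℕ) (hp : 1 ≤ p) (hθ : 1 ≤ θ)
    (W : ℝ → Matrix (Fin p) (Fin p) ℝ)
    (hWmeas : ∀ i j : Fin p, Measurable fun x : ℝ => W x i j)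
    (hWint : ∀ (k : ℕ) (i j : Fin p), Integrable fun x : ℝ => x ^ k * W x i j)
    (hM : ∀ (n α : ℕ), 1 ≤ n → IsUnit (momMat θ W n α))
    (P Q : ℕ → ℕ → Polynomial (Matrix (Fin p) (Fin p) ℝ))
    (hPmonic : ∀ n α : ℕ, MonicDeg (P n α) n)
    (hPorth : ∀ n α : ℕ, ∀ i < n, bform θ W α (P n α) (X ^ i) = 0)
    (hQmonic : ∀ n α : ℕ, MonicDeg (Q n α) n)
    (hQorth : ∀ n α : ℕ, ∀ i < n, bform θ W α (X ^ i) (Q n α) = 0)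
    (H : ℕ → ℕ → Matrix (Fin p) (Fin p) ℝ)
    (hHdef : ∀ n α : ℕ, H n α = bform θ W α (P n α) (X ^ n))
    (hHunit : ∀ n α : ℕ, IsUnit (H n α)) :
    ∀ n : ℕ, 1 ≤ n → ∀ α : ℕ,
      P n α
        = P n (α + θ)
          + C (H n α * Ring.inverse (H (n - 1) (α + θ))) * P (n - 1) (α + θ) := by
  intro n hn α
  set ε : Matrix (Fin p) (Fin p) ℝ := H n α * Ring.inverse (H (n - 1) (α + θ)) with hε
  set D : Polynomial (Matrix (Fin p) (Fin p) ℝ) :=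
    P n α - P n (α + θ) - C ε * P (n - 1) (α + θ) with hD
  have hn1 : n - 1 < n := Nat.sub_lt hn one_pos
  -- high coefficients of D vanish
  have hD0 : ∀ k, n ≤ k → D.coeff k = 0 := by
    intro k hk
    rcases eq_or_lt_of_le hk with h | h
    · subst h
      rw [hD]
      simp only [Polynomial.coeff_sub, Polynomial.coeff_C_mul]
      rw [(hPmonic n α).1, (hPmonic n (α + θ)).1, (hPmonic (n - 1) (α + θ)).2 n hn1,
        mul_zero, sub_zero, sub_self]
    · simp [hD, Polynomial.coeff_sub, Polynomial.coeff_C_mul,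
        (hPmonic n α).2 k h, (hPmonic n (α + θ)).2 k h,
        (hPmonic (n - 1) (α + θ)).2 k (lt_trans hn1 h)]
  have hD1 : ∀ k, n + 1 ≤ k → D.coeff k = 0 := fun k hk => hD0 k (by omega)
  have hA : ∀ k, n + 1 ≤ k → (P n α).coeff k = 0 :=
    fun k hk => (hPmonic n α).2 k (by omega)
  have hB : ∀ k, n + 1 ≤ k → (P n (α + θ)).coeff k = 0 :=
    fun k hk => (hPmonic n (α + θ)).2 k (by omega)
  have hC : ∀ k, n + 1 ≤ k → (P (n - 1) (α + θ)).coeff k = 0 :=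
    fun k hk => (hPmonic (n - 1) (α + θ)).2 k (by omega)
  -- the shift identity
  have hshift : ∀ i : ℕ,
      bform θ W (α + θ) (P n α) (X ^ i) = bform θ W α (P n α) (X ^ (i + 1)) := by
    intro i
    rw [bform_X_pow_range θ W hWint (α + θ) i (n + 1) _ hA,
      bform_X_pow_range θ W hWint α (i + 1) (n + 1) _ hA]
    refine Finset.sum_congr rfl fun k _ => ?_
    have he : α + θ + k + i * θ = α + k + (i + 1) * θ := by ring
    rw [he]
  -- orthogonality of D w.r.t. the (α+θ) form
  have horth : ∀ i, i < n → bform θ W (α + θ) D (X ^ i) = 0 := by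
    intro i hi
    have key : bform θ W (α + θ) D (X ^ i)
        = bform θ W (α + θ) (P n α) (X ^ i)
          - bform θ W (α + θ) (P n (α + θ)) (X ^ i)
          - ε * bform θ W (α + θ) (P (n - 1) (α + θ)) (X ^ i) := by
      rw [bform_X_pow_range θ W hWint (α + θ) i (n + 1) _ hD1,
        bform_X_pow_range θ W hWint (α + θ) i (n + 1) _ hA,
        bform_X_pow_range θ W hWint (α + θ) i (n + 1) _ hB,
        bform_X_pow_range θ W hWint (α + θ) i (n + 1) _ hC,
        ← Finset.sum_sub_distrib, Finset.mul_sum, ← Finset.sum_sub_distrib]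
      refine Finset.sum_congr rfl fun k _ => ?_
      rw [hD, Polynomial.coeff_sub, Polynomial.coeff_sub, Polynomial.coeff_C_mul,
        sub_mul, sub_mul, mul_assoc]
    rcases lt_or_ge i (n - 1) with h | h
    · rw [key, hshift i, hPorth n α (i + 1) (by omega),
        hPorth n (α + θ) i hi, hPorth (n - 1) (α + θ) i h]
      simp
    · have hi' : i = n - 1 := by omega
      subst hi'
      have h1 : bform θ W (α + θ) (P n α) (X ^ (n - 1)) = H n α := by
        have he : n - 1 + 1 = n := by omega
        rw [hshift, he, hHdef n α]
      rw [key, h1, hPorth n (α + θ) (n - 1) hn1, ← hHdef (n - 1) (α + θ), hε,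
        mul_assoc, Ring.inverse_mul_cancel _ (hHunit (n - 1) (α + θ)), mul_one]
      simp
  -- all coefficients of D vanish
  have hcoef : ∀ k, D.coeff k = 0 := by
    have hvm : Matrix.vecMul (fun k : Fin n => D.coeff (k : ℕ)) (momMat θ W n (α + θ)) = 0 := by
      funext j
      have h0 := horth j j.isLt
      rw [bform_X_pow_range θ W hWint (α + θ) j n D (fun k hk => hD0 k hk)] at h0
      rw [← Fin.sum_univ_eq_sum_range
        (fun k => D.coeff k * mom W (α + θ + k + (j : ℕ) * θ)) n] at h0
      simpa [Matrix.vecMul, dotProduct, momMat] using h0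
    have hz := vec_eq_zero (momMat θ W n (α + θ)) (hM n (α + θ) hn) _ hvm
    intro k
    rcases lt_or_ge k n with h | h
    · exact congrFun hz ⟨k, h⟩
    · exact hD0 k h
  have hDzero : D = 0 := Polynomial.ext fun k => by rw [hcoef k, Polynomial.coeff_zero]
  rw [hD, sub_sub, sub_eq_zero] at hDzero
  exact hDzero
end

section
/- (Geronimus transformation for the Q-family.) For every n ≥ 1 and α ∈ ℕ: Q_n^{(α)}(x) = Q_n^{(α+1)}(x) + e_n^{(α)}·Q_{n−1}^{(α+1)}(x), where e_n^{(α)} is determined by (e_n^{(α)})^⊤ := (H_{n−1}^{(α+1)})^{−1}·H_n^{(α)}. -/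
open MeasureTheory Polynomial Matrix Filter

lemma mpEval_eq {p : ℕ} (f : Polynomial (Matrix (Fin p) (Fin p) ℝ)) (x : ℝ) (N : ℕ)
    (hf : ∀ k, N ≤ k → f.coeff k = 0) :
    mpEval f x = ∑ k ∈ Finset.range N, x ^ k • f.coeff k := by
  unfold mpEval
  rw [Polynomial.sum]
  apply Finset.sum_subset
  · intro k hk
    simp only [Finset.mem_range]
    by_contra h
    exact (Polynomial.mem_support_iff.mp hk) (hf k (le_of_not_gt h))
  · intro k _ hk
    rw [Polynomial.notMem_support_iff.mp hk, smul_zero]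

private lemma sum4comm {β : Type*} [AddCommMonoid β] {γ : Type*} [Fintype γ]
    (s1 s2 : Finset ℕ) (T : ℕ → ℕ → γ → γ → β) :
    (∑ b : γ, ∑ l ∈ s2, ∑ k ∈ s1, ∑ a : γ, T k l a b)
      = ∑ k ∈ s1, ∑ l ∈ s2, ∑ b : γ, ∑ a : γ, T k l a b :=
  calc (∑ b : γ, ∑ l ∈ s2, ∑ k ∈ s1, ∑ a : γ, T k l a b)
      = ∑ l ∈ s2, ∑ b : γ, ∑ k ∈ s1, ∑ a : γ, T k l a b := Finset.sum_comm
    _ = ∑ l ∈ s2, ∑ k ∈ s1, ∑ b : γ, ∑ a : γ, T k l a b :=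
        Finset.sum_congr rfl fun _ _ => Finset.sum_comm
    _ = ∑ k ∈ s1, ∑ l ∈ s2, ∑ b : γ, ∑ a : γ, T k l a b := Finset.sum_comm

lemma bform_eq {p : ℕ} (θ : ℕ) (W : ℝ → Matrix (Fin p) (Fin p) ℝ)
    (hWint : ∀ (k : ℕ) (i j : Fin p), Integrable fun x : ℝ => x ^ k * W x i j)
    (α : ℕ) (f g : Polynomial (Matrix (Fin p) (Fin p) ℝ)) (N M : ℕ)
    (hf : ∀ k, N ≤ k → f.coeff k = 0) (hg : ∀ l, M ≤ l → g.coeff l = 0) :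
    bform θ W α f g
      = ∑ k ∈ Finset.range N, ∑ l ∈ Finset.range M,
          f.coeff k * mom W (α + k + l * θ) * (g.coeff l)ᵀ := by
  ext i j
  have key : ∀ x : ℝ, (mpEval f x * (x ^ α • W x) * (mpEval g (x ^ θ))ᵀ) i j
      = ∑ b : Fin p, ∑ l ∈ Finset.range M, ∑ k ∈ Finset.range N, ∑ a : Fin p,
          f.coeff k i a * g.coeff l j b * (x ^ (α + k + l * θ) * W x a b) := by
    intro x
    rw [mpEval_eq f x N hf, mpEval_eq g _ M hg]
    simp only [Matrix.mul_apply, Matrix.transpose_apply, Matrix.sum_apply,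
      Matrix.smul_apply, smul_eq_mul, Finset.sum_mul, Finset.mul_sum]
    apply Finset.sum_congr rfl; intro b _
    apply Finset.sum_congr rfl; intro l _
    apply Finset.sum_congr rfl; intro k _
    apply Finset.sum_congr rfl; intro a _
    rw [show α + k + l * θ = k + α + θ * l by ring, pow_add, pow_add]
    ring
  have hint : ∀ (k l : ℕ) (a b : Fin p),
      Integrable fun x : ℝ => f.coeff k i a * g.coeff l j b * (x ^ (α + k + l * θ) * W x a b) :=
    fun k l a b => (hWint (α + k + l * θ) a b).const_mul _
  show (∫ x : ℝ, (mpEval f x * (x ^ α • W x) * (mpEval g (x ^ θ))ᵀ) i j) = _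
  rw [integral_congr_ae (Filter.EventuallyEq.of_eq (funext key))]
  rw [integral_finset_sum _ (fun b _ =>
    integrable_finset_sum _ (fun l _ =>
      integrable_finset_sum _ (fun k _ =>
        integrable_finset_sum _ (fun a _ => hint k l a b))))]
  have step : ∀ b ∈ (Finset.univ : Finset (Fin p)),
      (∫ x : ℝ, ∑ l ∈ Finset.range M, ∑ k ∈ Finset.range N, ∑ a : Fin p,
          f.coeff k i a * g.coeff l j b * (x ^ (α + k + l * θ) * W x a b))
        = ∑ l ∈ Finset.range M, ∑ k ∈ Finset.range N, ∑ a : Fin p,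
            f.coeff k i a * g.coeff l j b * (mom W (α + k + l * θ) a b) := by
    intro b _
    rw [integral_finset_sum _ (fun l _ =>
      integrable_finset_sum _ (fun k _ =>
        integrable_finset_sum _ (fun a _ => hint k l a b)))]
    apply Finset.sum_congr rfl; intro l _
    rw [integral_finset_sum _ (fun k _ =>
      integrable_finset_sum _ (fun a _ => hint k l a b))]
    apply Finset.sum_congr rfl; intro k _
    rw [integral_finset_sum _ (fun a _ => hint k l a b)]
    apply Finset.sum_congr rfl; intro a _
    rw [integral_const_mul]
    rfl
  rw [Finset.sum_congr rfl step, sum4comm]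
  simp only [Matrix.sum_apply, Matrix.mul_apply, Matrix.transpose_apply, Finset.sum_mul]
  apply Finset.sum_congr rfl; intro k _
  apply Finset.sum_congr rfl; intro l _
  apply Finset.sum_congr rfl; intro b _
  apply Finset.sum_congr rfl; intro a _
  ring

lemma Xpow_coeff_bound {p : ℕ} (k : ℕ) :
    ∀ l, k + 1 ≤ l → ((X : Polynomial (Matrix (Fin p) (Fin p) ℝ)) ^ k).coeff l = 0 := by
  intro l hl
  rw [Polynomial.coeff_X_pow]
  simp only [ite_eq_right_iff]
  intro h; omega

lemma bform_Xpow {p : ℕ} (θ : ℕ) (W : ℝ → Matrix (Fin p) (Fin p) ℝ)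
    (hWint : ∀ (k : ℕ) (i j : Fin p), Integrable fun x : ℝ => x ^ k * W x i j)
    (α k : ℕ) (g : Polynomial (Matrix (Fin p) (Fin p) ℝ)) (M : ℕ)
    (hg : ∀ l, M ≤ l → g.coeff l = 0) :
    bform θ W α (X ^ k) g
      = ∑ l ∈ Finset.range M, mom W (α + k + l * θ) * (g.coeff l)ᵀ := by
  rw [bform_eq θ W hWint α _ g (k + 1) M (Xpow_coeff_bound k) hg]
  rw [Finset.sum_eq_single_of_mem k (Finset.self_mem_range_succ k)]
  · apply Finset.sum_congr rfl; intro l _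
    rw [Polynomial.coeff_X_pow, if_pos rfl, one_mul]
  · intro k' _ hk'
    apply Finset.sum_eq_zero; intro l _
    rw [Polynomial.coeff_X_pow, if_neg hk', zero_mul, zero_mul]

lemma bform_Xpow_shift {p : ℕ} (θ : ℕ) (W : ℝ → Matrix (Fin p) (Fin p) ℝ)
    (hWint : ∀ (k : ℕ) (i j : Fin p), Integrable fun x : ℝ => x ^ k * W x i j)
    (α k : ℕ) (g : Polynomial (Matrix (Fin p) (Fin p) ℝ)) (M : ℕ)
    (hg : ∀ l, M ≤ l → g.coeff l = 0) :
    bform θ W (α + 1) (X ^ k) g = bform θ W α (X ^ (k + 1)) g := by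
  rw [bform_Xpow θ W hWint (α + 1) k g M hg, bform_Xpow θ W hWint α (k + 1) g M hg]
  apply Finset.sum_congr rfl; intro l _
  rw [show α + 1 + k + l * θ = α + (k + 1) + l * θ by ring]

lemma bform_left_expand {p : ℕ} (θ : ℕ) (W : ℝ → Matrix (Fin p) (Fin p) ℝ)
    (hWint : ∀ (k : ℕ) (i j : Fin p), Integrable fun x : ℝ => x ^ k * W x i j)
    (α : ℕ) (f g : Polynomial (Matrix (Fin p) (Fin p) ℝ)) (N M : ℕ)
    (hf : ∀ k, N ≤ k → f.coeff k = 0) (hg : ∀ l, M ≤ l → g.coeff l = 0) :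
    bform θ W α f g = ∑ k ∈ Finset.range N, f.coeff k * bform θ W α (X ^ k) g := by
  rw [bform_eq θ W hWint α f g N M hf hg]
  apply Finset.sum_congr rfl; intro k _
  rw [bform_Xpow θ W hWint α k g M hg, Finset.mul_sum]
  apply Finset.sum_congr rfl; intro l _
  rw [mul_assoc]

lemma bform_right_Xpow {p : ℕ} (θ : ℕ) (W : ℝ → Matrix (Fin p) (Fin p) ℝ)
    (hWint : ∀ (k : ℕ) (i j : Fin p), Integrable fun x : ℝ => x ^ k * W x i j)
    (α : ℕ) (f : Polynomial (Matrix (Fin p) (Fin p) ℝ)) (l N : ℕ)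
    (hf : ∀ k, N ≤ k → f.coeff k = 0) :
    bform θ W α f (X ^ l) = ∑ k ∈ Finset.range N, f.coeff k * mom W (α + k + l * θ) := by
  rw [bform_eq θ W hWint α f _ N (l + 1) hf (Xpow_coeff_bound l)]
  apply Finset.sum_congr rfl; intro k _
  rw [Finset.sum_eq_single_of_mem l (Finset.self_mem_range_succ l)]
  · rw [Polynomial.coeff_X_pow, if_pos rfl, Matrix.transpose_one, mul_one]
  · intro l' _ hl'
    rw [Polynomial.coeff_X_pow, if_neg hl', Matrix.transpose_zero, mul_zero]

lemma bform_right_expand {p : ℕ} (θ : ℕ) (W : ℝ → Matrix (Fin p) (Fin p) ℝ)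
    (hWint : ∀ (k : ℕ) (i j : Fin p), Integrable fun x : ℝ => x ^ k * W x i j)
    (α : ℕ) (f g : Polynomial (Matrix (Fin p) (Fin p) ℝ)) (N M : ℕ)
    (hf : ∀ k, N ≤ k → f.coeff k = 0) (hg : ∀ l, M ≤ l → g.coeff l = 0) :
    bform θ W α f g = ∑ l ∈ Finset.range M, bform θ W α f (X ^ l) * (g.coeff l)ᵀ := by
  rw [bform_eq θ W hWint α f g N M hf hg, Finset.sum_comm]
  apply Finset.sum_congr rfl; intro l _
  rw [bform_right_Xpow θ W hWint α f l N hf, Finset.sum_mul]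

private lemma auxUnit {α : Type*} [Ring α] {n : Type*} [Fintype n] [DecidableEq n]
    (M : Matrix n n α) (hMu : IsUnit M) (v : n → α) (h : M.mulVec v = 0) : v = 0 := by
  obtain ⟨U, hU⟩ := hMu
  have h2 := congrArg (fun w => Matrix.mulVec (U⁻¹).val w) h
  simp only [Matrix.mulVec_mulVec, Matrix.mulVec_zero] at h2
  rw [← hU, Units.inv_mul, Matrix.one_mulVec] at h2
  exact h2

/-- Geronimus transformation for the Q-family:
`Q_n^{(α)} = Q_n^{(α+1)} + e_n^{(α)}·Q_{n-1}^{(α+1)}` with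
`(e_n^{(α)})ᵀ = (H_{n-1}^{(α+1)})⁻¹·H_n^{(α)}`. -/
theorem statement10
    (p θ : ℕ) (hp : 1 ≤ p) (hθ : 1 ≤ θ)
    (W : ℝ → Matrix (Fin p) (Fin p) ℝ)
    (hWmeas : ∀ i j : Fin p, Measurable fun x : ℝ => W x i j)
    (hWint : ∀ (k : ℕ) (i j : Fin p), Integrable fun x : ℝ => x ^ k * W x i j)
    (hM : ∀ (n α : ℕ), 1 ≤ n → IsUnit (momMat θ W n α))
    (P Q : ℕ → ℕ → Polynomial (Matrix (Fin p) (Fin p) ℝ))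
    (hPmonic : ∀ n α : ℕ, MonicDeg (P n α) n)
    (hPorth : ∀ n α : ℕ, ∀ i < n, bform θ W α (P n α) (X ^ i) = 0)
    (hQmonic : ∀ n α : ℕ, MonicDeg (Q n α) n)
    (hQorth : ∀ n α : ℕ, ∀ i < n, bform θ W α (X ^ i) (Q n α) = 0)
    (H : ℕ → ℕ → Matrix (Fin p) (Fin p) ℝ)
    (hHdef : ∀ n α : ℕ, H n α = bform θ W α (P n α) (X ^ n))
    (hHunit : ∀ n α : ℕ, IsUnit (H n α)) :
    ∀ n : ℕ, 1 ≤ n → ∀ α : ℕ,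
      Q n α
        = Q n (α + 1)
          + C ((Ring.inverse (H (n - 1) (α + 1)) * H n α)ᵀ) * Q (n - 1) (α + 1) := by
  have hQb : ∀ (n' β : ℕ), ∀ l, n' + 1 ≤ l → (Q n' β).coeff l = 0 :=
    fun n' β l hl => (hQmonic n' β).2 l (by omega)
  have hPb : ∀ (n' β : ℕ), ∀ k, n' + 1 ≤ k → (P n' β).coeff k = 0 :=
    fun n' β k hk => (hPmonic n' β).2 k (by omega)
  -- key identity: ⟨X^n, Q n β⟩^β = H n β
  have I1 : ∀ (n β : ℕ), bform θ W β (X ^ n) (Q n β) = H n β := by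
    intro n β
    have h1 : bform θ W β (P n β) (Q n β) = H n β := by
      rw [bform_right_expand θ W hWint β _ _ (n + 1) (n + 1) (hPb n β) (hQb n β),
        Finset.sum_range_succ,
        Finset.sum_eq_zero (fun l hl => by
          rw [hPorth n β l (Finset.mem_range.mp hl), zero_mul]),
        zero_add, (hQmonic n β).1, Matrix.transpose_one, mul_one, hHdef]
    have h2 : bform θ W β (P n β) (Q n β) = bform θ W β (X ^ n) (Q n β) := by
      rw [bform_left_expand θ W hWint β _ _ (n + 1) (n + 1) (hPb n β) (hQb n β),
        Finset.sum_range_succ,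
        Finset.sum_eq_zero (fun k hk => by
          rw [hQorth n β k (Finset.mem_range.mp hk), mul_zero]),
        zero_add, (hPmonic n β).1, one_mul]
    rw [← h2, h1]
  intro n hn α
  obtain ⟨m, rfl⟩ : ∃ m, n = m + 1 := ⟨n - 1, by omega⟩
  simp only [Nat.add_sub_cancel]
  set e : Matrix (Fin p) (Fin p) ℝ := (Ring.inverse (H m (α + 1)) * H (m + 1) α)ᵀ with he
  rw [← sub_eq_zero]
  set D : Polynomial (Matrix (Fin p) (Fin p) ℝ) :=
    Q (m + 1) α - (Q (m + 1) (α + 1) + C e * Q m (α + 1)) with hD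
  -- coefficient bound for D
  have hDb : ∀ l, m + 1 ≤ l → D.coeff l = 0 := by
    intro l hl
    simp only [hD, Polynomial.coeff_sub, Polynomial.coeff_add, Polynomial.coeff_C_mul]
    rcases eq_or_lt_of_le hl with h | h
    · rw [← h, (hQmonic (m + 1) α).1, (hQmonic (m + 1) (α + 1)).1,
        hQb m (α + 1) (m + 1) (le_refl _), mul_zero, add_zero, sub_self]
    · rw [(hQmonic (m + 1) α).2 l h, (hQmonic (m + 1) (α + 1)).2 l h,
        hQb m (α + 1) l (by omega), mul_zero, add_zero, sub_self]
  -- split ⟨X^i, D⟩ into the three pieces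
  have hsplit : ∀ i : ℕ, bform θ W (α + 1) (X ^ i) D
      = bform θ W (α + 1) (X ^ i) (Q (m + 1) α)
        - bform θ W (α + 1) (X ^ i) (Q (m + 1) (α + 1))
        - bform θ W (α + 1) (X ^ i) (Q m (α + 1)) * eᵀ := by
    intro i
    rw [bform_Xpow θ W hWint (α + 1) i D (m + 2) (fun l hl => hDb l (by omega)),
      bform_Xpow θ W hWint (α + 1) i _ (m + 2) (hQb (m + 1) α),
      bform_Xpow θ W hWint (α + 1) i _ (m + 2) (hQb (m + 1) (α + 1)),
      bform_Xpow θ W hWint (α + 1) i _ (m + 2) (fun l hl => hQb m (α + 1) l (by omega)),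
      Finset.sum_mul, ← Finset.sum_sub_distrib, ← Finset.sum_sub_distrib]
    apply Finset.sum_congr rfl; intro l _
    simp only [hD, Polynomial.coeff_sub, Polynomial.coeff_add, Polynomial.coeff_C_mul,
      Matrix.transpose_sub, Matrix.transpose_add, Matrix.transpose_mul]
    noncomm_ring
  -- all rows vanish
  have hrow : ∀ i : ℕ, i < m + 1 → bform θ W (α + 1) (X ^ i) D = 0 := by
    intro i hi
    rw [hsplit i]
    rcases Nat.lt_succ_iff_lt_or_eq.mp hi with h | h
    · rw [bform_Xpow_shift θ W hWint α i _ (m + 2) (hQb (m + 1) α),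
        hQorth (m + 1) α (i + 1) (by omega),
        hQorth (m + 1) (α + 1) i (by omega),
        hQorth m (α + 1) i h, zero_mul, sub_zero, sub_self]
    · rw [h]
      rw [bform_Xpow_shift θ W hWint α m _ (m + 2) (hQb (m + 1) α),
        I1 (m + 1) α, hQorth (m + 1) (α + 1) m (by omega), I1 m (α + 1), sub_zero,
        he, Matrix.transpose_transpose, ← mul_assoc,
        Ring.mul_inverse_cancel _ (hHunit m (α + 1)), one_mul, sub_self]
  -- translate into mulVec
  set v : Fin (m + 1) → Matrix (Fin p) (Fin p) ℝ := fun l => (D.coeff (l : ℕ))ᵀ with hv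
  have hmv : (momMat θ W (m + 1) (α + 1)).mulVec v = 0 := by
    funext i
    have h0 := hrow i i.isLt
    rw [bform_Xpow θ W hWint (α + 1) (i : ℕ) D (m + 1) hDb] at h0
    show ∑ j : Fin (m + 1), momMat θ W (m + 1) (α + 1) i j * v j = 0
    rw [show (∑ j : Fin (m + 1), momMat θ W (m + 1) (α + 1) i j * v j)
        = ∑ l ∈ Finset.range (m + 1),
            mom W (α + 1 + (i : ℕ) + l * θ) * (D.coeff l)ᵀ from
      Fin.sum_univ_eq_sum_range (fun l => mom W (α + 1 + (i : ℕ) + l * θ) * (D.coeff l)ᵀ) (m + 1)]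
    exact h0
  have hv0 : v = 0 := auxUnit _ (hM (m + 1) (α + 1) (by omega)) v hmv
  have hD0 : D = 0 := by
    apply Polynomial.ext; intro l
    rw [Polynomial.coeff_zero]
    rcases lt_or_ge l (m + 1) with h | h
    · have := congrFun hv0 ⟨l, h⟩
      simp only [hv, Pi.zero_apply] at this
      exact Matrix.transpose_eq_zero.mp this
    · exact hDb l h
  exact hD0
end
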